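/- arXiv:2205.12300 — 3 statements merged into one kernel-verified Lean document; each statement's English description precedes it below -/
import Mathlib

section
/- Let k', a, M > 0 and let v : ℝ_{≥0} → ℝ_{≥0} be differentiable and satisfy v'(t) ≤ -2k'·v(t) + 2aM·√(v(t)) for all t ≥ 0. Then for all t ≥ 0, √(v(t)) ≤ √(v(0))·e^{-k't} + (aM/k')·(1 - e^{-k't}); in particular limsup_{t→∞} √(v(t)) ≤ aM/k'. -/
/-!
For `w = e^{2k't} v` the hypothesis becomes `w' ≤ 2aM e^{k't} √w`, i.e. formally
`(√w)' ≤ aM e^{k't}`; integrating from `0` to `t` and dividing by `e^{k't}` gives the bound, and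
the limsup follows since `e^{-k't} → 0`. As `√` is not differentiable at `0`, the comparison is
carried out for `√(w + δ)`, which is differentiable, and then `δ → 0`.
-/

open Real Filter Set Topology

section SqrtComparison

variable {w w' G G' : ℝ → ℝ} {x y : ℝ}

lemma monotoneOn_sub_sqrt_add_of_hasDerivAt_le {δ : ℝ} (hδ : 0 < δ)
    (hw₀ : ∀ t ∈ Icc x y, 0 ≤ w t) (hw : ∀ t ∈ Icc x y, HasDerivAt w (w' t) t)
    (hG : ∀ t ∈ Icc x y, HasDerivAt G (G' t) t) (hG' : ∀ t ∈ Icc x y, 0 ≤ G' t)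
    (hle : ∀ t ∈ Icc x y, w' t ≤ 2 * G' t * √(w t)) :
    MonotoneOn (fun t => G t - √(w t + δ)) (Icc x y) := by
  have hpos : ∀ t ∈ Icc x y, 0 < w t + δ := fun t ht => by linarith [hw₀ t ht]
  have hderiv : ∀ t ∈ Icc x y, HasDerivAt (fun t => G t - √(w t + δ))
      (G' t - w' t / (2 * √(w t + δ))) t := fun t ht =>
    (hG t ht).sub (((hw t ht).add_const δ).sqrt (hpos t ht).ne')
  refine monotoneOn_of_hasDerivWithinAt_nonneg (convex_Icc x y)
    (fun t ht => (hderiv t ht).continuousAt.continuousWithinAt)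
    (fun t ht => (hderiv t (interior_subset ht)).hasDerivWithinAt) fun t ht => ?_
  replace ht := interior_subset ht
  have hsqrt : 0 < √(w t + δ) := sqrt_pos.2 (hpos t ht)
  rw [sub_nonneg, div_le_iff₀ (by positivity)]
  calc w' t ≤ 2 * G' t * √(w t) := hle t ht
    _ ≤ 2 * G' t * √(w t + δ) := by gcongr; exacts [by linarith [hG' t ht], by linarith]
    _ = G' t * (2 * √(w t + δ)) := by ring

lemma sqrt_add_sq_le {u : ℝ} (hu : 0 ≤ u) (ε : ℝ) (hε : 0 ≤ ε) : √(u + ε ^ 2) ≤ √u + ε := by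
  rw [sqrt_le_iff]
  refine ⟨by positivity, ?_⟩
  nlinarith [sq_sqrt hu, sqrt_nonneg u]

lemma sqrt_le_sqrt_add_sub_of_hasDerivAt_le (hxy : x ≤ y)
    (hw₀ : ∀ t ∈ Icc x y, 0 ≤ w t) (hw : ∀ t ∈ Icc x y, HasDerivAt w (w' t) t)
    (hG : ∀ t ∈ Icc x y, HasDerivAt G (G' t) t) (hG' : ∀ t ∈ Icc x y, 0 ≤ G' t)
    (hle : ∀ t ∈ Icc x y, w' t ≤ 2 * G' t * √(w t)) :
    √(w y) ≤ √(w x) + (G y - G x) := by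
  refine le_of_forall_pos_le_add fun ε hε => ?_
  have hmono := monotoneOn_sub_sqrt_add_of_hasDerivAt_le (pow_pos hε 2) hw₀ hw hG hG' hle
    (left_mem_Icc.2 hxy) (right_mem_Icc.2 hxy) hxy
  have hx := sqrt_add_sq_le (hw₀ x (left_mem_Icc.2 hxy)) ε hε.le
  have hy : √(w y) ≤ √(w y + ε ^ 2) := sqrt_le_sqrt (le_add_of_nonneg_right (sq_nonneg ε))
  simp only at hmono
  linarith

end SqrtComparison

lemma sqrt_exp_two_mul_mul (c u : ℝ) : √(exp (2 * c) * u) = exp c * √u := by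
  rw [sqrt_mul (exp_pos _).le, show 2 * c = c + c by ring, exp_add, sqrt_mul_self (exp_pos c).le]

lemma sqrt_le_of_deriv_le_neg_two_mul_add {k c : ℝ} (hk : k ≠ 0) (hc : 0 ≤ c) {v v' : ℝ → ℝ}
    (hnn : ∀ t, 0 ≤ t → 0 ≤ v t) (hd : ∀ t, 0 ≤ t → HasDerivAt v (v' t) t)
    (hineq : ∀ t, 0 ≤ t → v' t ≤ -2 * k * v t + 2 * c * √(v t)) {t : ℝ} (ht : 0 ≤ t) :
    √(v t) ≤ √(v 0) * exp (-(k * t)) + c / k * (1 - exp (-(k * t))) := by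
  have hexp : ∀ b s : ℝ, HasDerivAt (fun s => exp (b * s)) (b * exp (b * s)) s := fun b s => by
    simpa [mul_comm] using ((hasDerivAt_id s).const_mul b).exp
  have key := sqrt_le_sqrt_add_sub_of_hasDerivAt_le (w := fun s => exp (2 * k * s) * v s)
    (G := fun s => c / k * exp (k * s)) (G' := fun s => c * exp (k * s)) ht
    (fun s hs => mul_nonneg (exp_pos _).le (hnn s hs.1))
    (fun s hs => (hexp (2 * k) s).mul (hd s hs.1))
    (fun s _ => ((hexp k s).const_mul (c / k)).congr_deriv (by field_simp))
    (fun s _ => by positivity)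
    (fun s hs => by
      have hsq : exp (2 * (k * s)) = exp (k * s) * exp (k * s) := by rw [← exp_add]; ring_nf
      rw [show 2 * k * s = 2 * (k * s) by ring, sqrt_exp_two_mul_mul, hsq]
      nlinarith [hineq s hs.1, mul_pos (exp_pos (k * s)) (exp_pos (k * s))])
  simp only [mul_assoc 2 k, sqrt_exp_two_mul_mul, mul_zero, exp_zero, one_mul, mul_one] at key
  rw [exp_neg, show √(v 0) * (exp (k * t))⁻¹ + c / k * (1 - (exp (k * t))⁻¹)
    = (√(v 0) + (c / k * exp (k * t) - c / k)) / exp (k * t) by field_simp,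
    le_div_iff₀ (exp_pos _)]
  linarith

theorem stmt10 (k' a M : ℝ) (hk : 0 < k') (ha : 0 < a) (hM : 0 < M)
    (v v' : ℝ → ℝ) (hnn : ∀ t : ℝ, 0 ≤ t → 0 ≤ v t)
    (hd : ∀ t : ℝ, 0 ≤ t → HasDerivAt v (v' t) t)
    (hineq : ∀ t : ℝ, 0 ≤ t → v' t ≤ -2 * k' * v t + 2 * a * M * Real.sqrt (v t)) :
    (∀ t : ℝ, 0 ≤ t → Real.sqrt (v t) ≤
      Real.sqrt (v 0) * Real.exp (-(k' * t)) + (a * M / k') * (1 - Real.exp (-(k' * t)))) ∧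
    Filter.limsup (fun t => Real.sqrt (v t)) Filter.atTop ≤ a * M / k' := by
  have bound : ∀ t : ℝ, 0 ≤ t → √(v t) ≤
      √(v 0) * exp (-(k' * t)) + a * M / k' * (1 - exp (-(k' * t))) := fun t ht =>
    sqrt_le_of_deriv_le_neg_two_mul_add hk.ne' (by positivity) hnn hd
      (fun s hs => (hineq s hs).trans_eq (by ring)) ht
  refine ⟨bound, ?_⟩
  have hlim : Tendsto (fun t => √(v 0) * exp (-(k' * t)) + a * M / k' * (1 - exp (-(k' * t))))
      atTop (𝓝 (a * M / k')) := by
    have he : Tendsto (fun t => exp (-(k' * t))) atTop (𝓝 0) :=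
      tendsto_exp_neg_atTop_nhds_zero.comp (tendsto_id.const_mul_atTop hk)
    simpa using (he.const_mul (√(v 0))).add
      (((tendsto_const_nhds (x := (1 : ℝ))).sub he).const_mul (a * M / k'))
  rw [← hlim.limsup_eq]
  exact limsup_le_limsup (eventually_atTop.2 ⟨0, bound⟩)
    (isCoboundedUnder_le_of_le atTop fun t => sqrt_nonneg (v t)) hlim.isBoundedUnder_le
end

section
/- Let a, c, k > 0 and suppose e : ℝ_{≥0} → ℝ is differentiable with e'(t) = -(k + a·δ(t))·e(t) + a·r(t)·δ(t), where |δ(t)| ≤ Δ for all t, |r(t)| ≤ R* for all t, and k ≥ aΔ + k' with k' > 0. Then d/dt (e(t)²) ≤ -2k'·e(t)² + 2aR*Δ·|e(t)| for all t ≥ 0, and consequently limsup_{t→∞} |e(t)| ≤ (aR*Δ)/k'. -/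
/-!
The margin `k'` absorbs the worst case of the multiplicative disturbance, so `V = e²` satisfies
`V' ≤ -2k'V + 2aR*Δ|e|`. Above any level `(aR*Δ/k' + ε)²` this forces `V` to decrease at a
uniform rate, so `V` eventually falls below the level and, its derivative being negative there,
never crosses it again.
-/

open Filter

theorem le_of_hasDerivAt_neg_of_eq {V V' : ℝ → ℝ} {B s t : ℝ} (hV : ∀ t, HasDerivAt V (V' t) t)
    (hneg : ∀ t, V t = B → V' t < 0) (hst : s ≤ t) (hs : V s ≤ B) : V t ≤ B :=
  image_le_of_deriv_right_lt_deriv_boundary (B := fun _ => B) (B' := fun _ => 0)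
    (fun x _ => (hV x).continuousAt.continuousWithinAt) (fun x _ => (hV x).hasDerivWithinAt) hs
    (fun _ => hasDerivAt_const _ _) (fun x _ => hneg x) ⟨hst, le_rfl⟩

theorem exists_le_of_hasDerivAt_le_neg {V V' : ℝ → ℝ} {B c : ℝ} (hV : ∀ t, HasDerivAt V (V' t) t)
    (hc : 0 < c) (hdecay : ∀ t, B ≤ V t → V' t ≤ -c) : ∃ T, V T ≤ B := by
  by_contra! hgt
  set T := (V 0 - B) / c
  have hT : 0 < T := div_pos (sub_pos.2 (hgt 0)) hc
  obtain ⟨ξ, -, hξ⟩ := exists_hasDerivAt_eq_slope V V' hT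
    (fun x _ => (hV x).continuousAt.continuousWithinAt) (fun x _ => hV x)
  have hslope : (V T - V 0) / T ≤ -c := by
    simpa only [hξ, sub_zero] using hdecay ξ (hgt ξ).le
  rw [div_le_iff₀ hT] at hslope
  have : c * T = V 0 - B := mul_div_cancel₀ _ hc.ne'
  linarith [hgt T]

theorem eventually_le_of_hasDerivAt_le_neg {V V' : ℝ → ℝ} {B c : ℝ}
    (hV : ∀ t, HasDerivAt V (V' t) t) (hc : 0 < c) (hdecay : ∀ t, B ≤ V t → V' t ≤ -c) :
    ∀ᶠ t in atTop, V t ≤ B := by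
  obtain ⟨T, hT⟩ := exists_le_of_hasDerivAt_le_neg hV hc hdecay
  filter_upwards [eventually_ge_atTop T] with t ht
  exact le_of_hasDerivAt_neg_of_eq hV (fun t h => (hdecay t h.ge).trans_lt (neg_neg_of_pos hc)) ht hT

theorem two_mul_mul_trackingDynamics_le {a k k' Δ R x d ρ : ℝ} (ha : 0 ≤ a)
    (hk : a * Δ + k' ≤ k) (hd : |d| ≤ Δ) (hρ : |ρ| ≤ R) :
    2 * x * (-(k + a * d) * x + a * ρ * d) ≤ -2 * k' * x ^ 2 + 2 * a * R * Δ * |x| := by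
  have hgain : k' ≤ k + a * d := by nlinarith [neg_abs_le d]
  have hforce : a * ρ * d * x ≤ a * R * Δ * |x| :=
    calc a * ρ * d * x ≤ |a * ρ * d * x| := le_abs_self _
      _ = a * (|ρ| * |d|) * |x| := by rw [abs_mul, abs_mul, abs_mul, abs_of_nonneg ha]; ring
      _ ≤ a * (R * Δ) * |x| := by
        have := mul_le_mul hρ hd (abs_nonneg _) ((abs_nonneg _).trans hρ)
        gcongr
      _ = a * R * Δ * |x| := by ring
  nlinarith [mul_le_mul_of_nonneg_right hgain (sq_nonneg x)]

theorem limsup_abs_le_of_hasDerivAt_sq_le {x V' : ℝ → ℝ} {k' b : ℝ}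
    (hV : ∀ t, HasDerivAt (fun s => x s ^ 2) (V' t) t) (hk' : 0 < k') (hb : 0 ≤ b)
    (hle : ∀ t, V' t ≤ -2 * k' * x t ^ 2 + 2 * b * |x t|) :
    limsup (fun t => |x t|) atTop ≤ b / k' := by
  set M := b / k'
  have hM : 0 ≤ M := div_nonneg hb hk'.le
  have hkM : k' * M = b := mul_div_cancel₀ _ hk'.ne'
  refine le_of_forall_pos_le_add fun ε hε => ?_
  have hsq : ∀ᶠ t in atTop, x t ^ 2 ≤ (M + ε) ^ 2 := by
    refine eventually_le_of_hasDerivAt_le_neg hV (c := 2 * k' * (M + ε) * ε) (by positivity)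
      fun t ht => ?_
    have hx : M + ε ≤ |x t| := by simpa [abs_of_pos (by positivity : 0 < M + ε)] using sq_le_sq.1 ht
    -- `V' ≤ -2k'|x|(|x| - M)`, and both factors are bounded below at this level
    have := hle t
    nlinarith [sq_abs (x t), mul_le_mul hx (by linarith : ε ≤ |x t| - M) hε.le (abs_nonneg _)]
  refine limsup_le_of_le (isCoboundedUnder_le_of_le atTop fun t => abs_nonneg _) ?_
  filter_upwards [hsq] with t ht
  simpa [abs_of_pos (by positivity : 0 < M + ε)] using sq_le_sq.1 ht

theorem stmt11_general (a k k' Δ Rs : ℝ) (ha : 0 < a)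
    (hk' : 0 < k') (hk : a * Δ + k' ≤ k)
    (e δ r : ℝ → ℝ)
    (hδ : ∀ t : ℝ, |δ t| ≤ Δ) (hr : ∀ t : ℝ, |r t| ≤ Rs)
    (he : ∀ t : ℝ, HasDerivAt e (-(k + a * δ t) * e t + a * r t * δ t) t) :
    (∀ t : ℝ, 0 ≤ t →
      deriv (fun s => e s ^ 2) t ≤ -2 * k' * e t ^ 2 + 2 * a * Rs * Δ * |e t|) ∧
    Filter.limsup (fun t => |e t|) Filter.atTop ≤ a * Rs * Δ / k' := by
  have hsq : ∀ t, HasDerivAt (fun s => e s ^ 2)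
      (2 * e t * (-(k + a * δ t) * e t + a * r t * δ t)) t := fun t =>
    ((he t).fun_pow 2).congr_deriv (by norm_num)
  have hbound : ∀ t, 2 * e t * (-(k + a * δ t) * e t + a * r t * δ t)
      ≤ -2 * k' * e t ^ 2 + 2 * a * Rs * Δ * |e t| := fun t =>
    two_mul_mul_trackingDynamics_le ha.le hk (hδ t) (hr t)
  have hforce : 0 ≤ a * Rs * Δ :=
    mul_nonneg (mul_nonneg ha.le ((abs_nonneg _).trans (hr 0))) ((abs_nonneg _).trans (hδ 0))
  exact ⟨fun t _ => (hsq t).deriv ▸ hbound t,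
    limsup_abs_le_of_hasDerivAt_sq_le hsq hk' hforce fun t => (hbound t).trans_eq (by ring)⟩

theorem stmt11 (a c k k' Δ Rs : ℝ) (ha : 0 < a) (hc : 0 < c) (hkpos : 0 < k)
    (hk' : 0 < k') (hΔ : 0 ≤ Δ) (hRs : 0 ≤ Rs) (hk : a * Δ + k' ≤ k)
    (e δ r : ℝ → ℝ)
    (hδ : ∀ t : ℝ, |δ t| ≤ Δ) (hr : ∀ t : ℝ, |r t| ≤ Rs)
    (he : ∀ t : ℝ, HasDerivAt e (-(k + a * δ t) * e t + a * r t * δ t) t) :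
    (∀ t : ℝ, 0 ≤ t →
      deriv (fun s => e s ^ 2) t ≤ -2 * k' * e t ^ 2 + 2 * a * Rs * Δ * |e t|) ∧
    Filter.limsup (fun t => |e t|) Filter.atTop ≤ a * Rs * Δ / k' :=
  stmt11_general a k k' Δ Rs ha hk' hk e δ r hδ hr he
end

section
/- Suppose I_d ⊆ ℝ_{≥0} is a countable union of disjoint closed intervals such that each connected interval of I_d has length ≥ τ_d, each connected gap of ℝ_{≥0} \ I_d has length < τ_s, |z₁(t)| ≥ z_low > 0 on I_d, and |z₁(t)| ≤ z_high on ℝ_{≥0} \ I_d, with z₁ measurable. Then for every t₀ ≥ 0 and every t ≥ t₀ + 2(τ_d + τ_s), we have ∫_{t₀}^{t} |z₁(s)| ds ≥ μ(t - t₀) with μ = (z_low·τ_d)/(2(τ_d + τ_s)). -/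
open MeasureTheory

theorem stmt14 (τd τs zlow zhigh : ℝ)
    (hτd : 0 < τd) (hτs : 0 < τs) (hzlow : 0 < zlow) (hzhigh : 0 < zhigh)
    (a b : ℕ → ℝ)
    (ha0 : 0 ≤ a 0) (hab : ∀ n, a n ≤ b n) (hba : ∀ n, b n ≤ a (n + 1))
    (hdwell : ∀ n, τd ≤ b n - a n)
    (hgap0 : a 0 < τs) (hgap : ∀ n, a (n + 1) - b n < τs)
    (z1 : ℝ → ℝ) (hmeas : Measurable z1)
    (hint : ∀ t₀ t : ℝ, IntervalIntegrable (fun s => |z1 s|) volume t₀ t)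
    (hlow : ∀ t ∈ ⋃ n, Set.Icc (a n) (b n), zlow ≤ |z1 t|)
    (hhigh : ∀ t : ℝ, 0 ≤ t → t ∉ ⋃ n, Set.Icc (a n) (b n) → |z1 t| ≤ zhigh) :
    ∀ t₀ : ℝ, 0 ≤ t₀ → ∀ t : ℝ, t₀ + 2 * (τd + τs) ≤ t →
      (zlow * τd) / (2 * (τd + τs)) * (t - t₀) ≤ ∫ s in t₀..t, |z1 s| := by
  classical
  intro t₀ ht₀ t ht
  set Q : ℝ := τd + τs with hQdef
  have hQpos : 0 < Q := by positivity
  have hnn : ∀ s : ℝ, 0 ≤ |z1 s| := fun s => abs_nonneg _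
  have nonneg_int : ∀ c d : ℝ, c ≤ d → 0 ≤ ∫ s in c..d, |z1 s| := fun c d h =>
    intervalIntegral.integral_nonneg h (fun s _ => hnn s)
  -- b n grows at least linearly
  have hbmono : ∀ n, b n + τd ≤ b (n + 1) := by
    intro n
    have h1 := hdwell (n + 1)
    have h2 := hba n
    linarith
  have hbge : ∀ n : ℕ, (n : ℝ) * τd ≤ b n := by
    intro n
    induction n with
    | zero =>
        have h1 := hdwell 0
        simp only [Nat.cast_zero, zero_mul]
        linarith [hab 0]
    | succ k ih =>
        have := hbmono k
        push_cast
        nlinarith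
  -- lower bound on a piece inside a dwell interval
  have piece : ∀ (c d : ℝ) (m : ℕ), a m ≤ c → c ≤ d → d ≤ b m →
      zlow * (d - c) ≤ ∫ s in c..d, |z1 s| := by
    intro c d m hac hcd hdb
    have hmono : ∫ s in c..d, zlow ≤ ∫ s in c..d, |z1 s| := by
      apply intervalIntegral.integral_mono_on hcd intervalIntegrable_const (hint c d)
      intro s hs
      exact hlow s (Set.mem_iUnion.mpr ⟨m, ⟨le_trans hac hs.1, le_trans hs.2 hdb⟩⟩)
    have : ∫ s in c..d, zlow = (d - c) * zlow := by
      simp [smul_eq_mul]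
    rw [this] at hmono
    linarith [hmono]
  -- splitting lemma : two ordered subintervals
  have split2 : ∀ u v w x : ℝ, ∀ p q : ℝ, p ≤ u → u ≤ v → v ≤ w → w ≤ x → x ≤ q →
      (∫ s in u..v, |z1 s|) + (∫ s in w..x, |z1 s|) ≤ ∫ s in p..q, |z1 s| := by
    intro u v w x p q h1 h2 h3 h4 h5
    have e1 : (∫ s in p..u, |z1 s|) + (∫ s in u..q, |z1 s|) = ∫ s in p..q, |z1 s| :=
      intervalIntegral.integral_add_adjacent_intervals (hint p u) (hint u q)
    have e2 : (∫ s in u..v, |z1 s|) + (∫ s in v..q, |z1 s|) = ∫ s in u..q, |z1 s| :=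
      intervalIntegral.integral_add_adjacent_intervals (hint u v) (hint v q)
    have e3 : (∫ s in v..w, |z1 s|) + (∫ s in w..q, |z1 s|) = ∫ s in v..q, |z1 s| :=
      intervalIntegral.integral_add_adjacent_intervals (hint v w) (hint w q)
    have e4 : (∫ s in w..x, |z1 s|) + (∫ s in x..q, |z1 s|) = ∫ s in w..q, |z1 s| :=
      intervalIntegral.integral_add_adjacent_intervals (hint w x) (hint x q)
    have n1 := nonneg_int p u h1
    have n2 := nonneg_int v w h3
    have n3 := nonneg_int x q h5
    linarith
  -- key per-window lemma
  have key : ∀ p : ℝ, 0 ≤ p → zlow * τd ≤ ∫ s in p..(p + Q), |z1 s| := by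
    intro p hp
    have hex : ∃ n : ℕ, p ≤ b n := by
      obtain ⟨n, hn⟩ := exists_nat_gt (p / τd)
      refine ⟨n, ?_⟩
      have h1 := hbge n
      rw [div_lt_iff₀ hτd] at hn
      linarith
    set n := Nat.find hex with hn
    have hbn : p ≤ b n := Nat.find_spec hex
    have hprev : ∀ m, m < n → b m < p := fun m hm => not_le.mp (Nat.find_min hex hm)
    -- produce u v w x m₁ m₂ with the needed properties
    obtain ⟨u, v, w, x, m₁, m₂, hpu, huv, hvw, hwx, hxQ, ha1, hb1, ha2, hb2, hlen⟩ :
        ∃ u v w x : ℝ, ∃ m₁ m₂ : ℕ, p ≤ u ∧ u ≤ v ∧ v ≤ w ∧ w ≤ x ∧ x ≤ p + Q ∧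
          a m₁ ≤ u ∧ v ≤ b m₁ ∧ a m₂ ≤ w ∧ x ≤ b m₂ ∧ τd ≤ (v - u) + (x - w) := by
      by_cases hcase : p ≤ a n
      · -- window starts before dwell n; a n < p + τs
        have han : a n < p + τs := by
          rcases Nat.eq_zero_or_pos n with h0 | hpos
          · rw [h0]; linarith
          · obtain ⟨m, hm⟩ := Nat.exists_eq_succ_of_ne_zero (Nat.pos_iff_ne_zero.mp hpos)
            have h1 := hprev m (by omega)
            have h2 := hgap m
            rw [hm]
            linarith
        refine ⟨a n, a n + τd, a n + τd, a n + τd, n, n, hcase, by linarith, le_refl _,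
          le_refl _, by simp only [hQdef]; linarith, le_refl _, by linarith [hdwell n],
          by linarith, by linarith [hdwell n], by linarith⟩
      · push_neg at hcase
        by_cases hb : p + τd ≤ b n
        · -- [p, p+τd] inside dwell n
          refine ⟨p, p + τd, p + τd, p + τd, n, n, le_refl _, by linarith, le_refl _,
            le_refl _, by simp only [hQdef]; linarith, hcase.le, hb, by linarith, hb,
            by linarith⟩
        · push_neg at hb
          -- tail of dwell n plus head of dwell n+1
          have hgapn := hgap n
          have hban := hba n
          have hd1 := hdwell (n + 1)
          refine ⟨p, b n, a (n + 1), min (a (n + 1) + τd) (p + Q), n, n + 1,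
            le_refl _, hbn, hban, ?_, min_le_right _ _, hcase.le, le_refl _,
            le_refl _, ?_, ?_⟩
          · apply le_min (by linarith)
            simp only [hQdef]; linarith
          · exact le_trans (min_le_left _ _) (by linarith)
          · rcases le_total (a (n + 1) + τd) (p + Q) with hle | hle
            · rw [min_eq_left hle]; linarith
            · rw [min_eq_right hle]; simp only [hQdef]; linarith
    have P1 := piece u v m₁ ha1 huv hb1
    have P2 := piece w x m₂ ha2 hwx hb2
    have S := split2 u v w x p (p + Q) hpu huv hvw hwx hxQ
    nlinarith [hzlow.le]
  -- sum over chunks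
  have sum : ∀ k : ℕ, t₀ + (k : ℝ) * Q ≤ t →
      (k : ℝ) * (zlow * τd) ≤ ∫ s in t₀..(t₀ + (k : ℝ) * Q), |z1 s| := by
    intro k
    induction k with
    | zero => intro _; simp
    | succ m ih =>
        intro hk
        have hm : t₀ + (m : ℝ) * Q ≤ t := by
          push_cast at hk ⊢
          nlinarith
        have hIH := ih hm
        have hp : (0 : ℝ) ≤ t₀ + (m : ℝ) * Q := by positivity
        have hkey := key (t₀ + (m : ℝ) * Q) hp
        have hadd : (∫ s in t₀..(t₀ + (m : ℝ) * Q), |z1 s|) +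
            (∫ s in (t₀ + (m : ℝ) * Q)..(t₀ + ((m : ℕ) + 1 : ℝ) * Q), |z1 s|) =
            ∫ s in t₀..(t₀ + ((m : ℕ) + 1 : ℝ) * Q), |z1 s| :=
          intervalIntegral.integral_add_adjacent_intervals (hint _ _) (hint _ _)
        have heq : t₀ + (m : ℝ) * Q + Q = t₀ + ((m : ℕ) + 1 : ℝ) * Q := by ring
        rw [heq] at hkey
        push_cast
        push_cast at hadd hIH
        linarith
  -- finish
  set L : ℝ := t - t₀ with hLdef
  have hL : 2 * Q ≤ L := by simp only [hLdef, hQdef]; linarith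
  set N : ℕ := ⌊L / Q⌋₊ with hNdef
  have hy2 : (2 : ℝ) ≤ L / Q := by
    rw [le_div_iff₀ hQpos]; linarith
  have hfl1 : (N : ℝ) ≤ L / Q := Nat.floor_le (by linarith)
  have hfl2 : L / Q < (N : ℝ) + 1 := Nat.lt_floor_add_one _
  have hNQ : t₀ + (N : ℝ) * Q ≤ t := by
    have : (N : ℝ) * Q ≤ L := by
      rw [← le_div_iff₀ hQpos] at *
      exact hfl1
    simp only [hLdef] at this
    linarith
  have hsum := sum N hNQ
  have htail : 0 ≤ ∫ s in (t₀ + (N : ℝ) * Q)..t, |z1 s| :=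
    nonneg_int _ _ hNQ
  have hadd : (∫ s in t₀..(t₀ + (N : ℝ) * Q), |z1 s|) +
      (∫ s in (t₀ + (N : ℝ) * Q)..t, |z1 s|) = ∫ s in t₀..t, |z1 s| :=
    intervalIntegral.integral_add_adjacent_intervals (hint _ _) (hint _ _)
  -- arithmetic: L/(2Q) ≤ N
  have harith : L / (2 * Q) ≤ (N : ℝ) := by
    have h1 : L / (2 * Q) = (L / Q) / 2 := by
      rw [div_div]; ring_nf
    rw [h1]
    linarith
  have hfinal : (zlow * τd) / (2 * Q) * L ≤ (N : ℝ) * (zlow * τd) := by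
    have h1 : (zlow * τd) / (2 * Q) * L = (zlow * τd) * (L / (2 * Q)) := by ring
    rw [h1]
    calc (zlow * τd) * (L / (2 * Q)) ≤ (zlow * τd) * (N : ℝ) := by
          apply mul_le_mul_of_nonneg_left harith (by positivity)
      _ = (N : ℝ) * (zlow * τd) := by ring
  simp only [hQdef] at hfinal
  simp only [hLdef] at hfinal
  linarith
end
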